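/- arXiv:2308.03445 — 3 statements merged into one kernel-verified Lean document; each statement's English description precedes it below -/
import Mathlib

section
/- The sequences τ_n = 3·(5/3)^{-n/2}·540^{(3^n-1)/4}, σ_n = (5/3)^{n/2}·540^{(3^n-1)/4}, ρ_n = (5/3)^{3n/2}·540^{(3^n-1)/4} satisfy the system of recursions τ_{n+1} = 6τ_n²σ_n, σ_{n+1} = 7τ_nσ_n² + τ_n²ρ_n, ρ_{n+1} = 14σ_n³ + 12τ_nσ_nρ_n, with initial values τ_0 = 3, σ_0 = 1, ρ_0 = 1. -/
/-!
Write `r = √(5/3)` and `b_n = 540^((3^n-1)/4)`. The closed forms are `τ_n = 3 b_n / r^n`,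
`σ_n = r^n b_n`, `ρ_n = r^{3n} b_n`, and since `√540 = 18 r` the step `n ↦ n+1` sends
`r^n ↦ r^n · r` and `b_n ↦ 18 r b_n³`. Substituting this ansatz, each recursion becomes a
polynomial identity in `r^n`, `b_n`, `r` that holds modulo `r² = 5/3`.
-/

namespace Real

theorem rpow_natCast_div_two {x : ℝ} (hx : 0 ≤ x) (n : ℕ) :
    x ^ ((n : ℝ) / 2) = √x ^ n := by
  rw [rpow_div_two_eq_sqrt _ hx, rpow_natCast]

theorem rpow_neg_natCast_div_two {x : ℝ} (hx : 0 ≤ x) (n : ℕ) :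
    x ^ (-(n : ℝ) / 2) = (√x ^ n)⁻¹ := by
  rw [rpow_div_two_eq_sqrt _ hx, rpow_neg (sqrt_nonneg x), rpow_natCast]

theorem rpow_three_mul_natCast_div_two {x : ℝ} (hx : 0 ≤ x) (n : ℕ) :
    x ^ (3 * (n : ℝ) / 2) = (√x ^ n) ^ 3 := by
  rw [← pow_mul, ← rpow_natCast_div_two hx]
  push_cast
  ring_nf

theorem rpow_three_pow_succ_sub_one_div_four {c : ℝ} (hc : 0 < c) (n : ℕ) :
    c ^ (((3 : ℝ) ^ (n + 1) - 1) / 4) = √c * (c ^ (((3 : ℝ) ^ n - 1) / 4)) ^ 3 := by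
  rw [sqrt_eq_rpow, ← rpow_mul_natCast hc.le, ← rpow_add hc]
  congr 1
  push_cast
  ring

end Real

theorem sqrt_540_eq : √(540 : ℝ) = 18 * √(5 / 3) := by
  rw [show (540 : ℝ) = 18 ^ 2 * (5 / 3) by norm_num, Real.sqrt_mul (by positivity),
    Real.sqrt_sq (by norm_num)]

section SierpinskiStep

variable {r x b : ℝ}

theorem sierpinski_tree_step (hr : r ≠ 0) (hx : x ≠ 0) :
    3 * (18 * r * b ^ 3) / (x * r) = 6 * (3 * b / x) ^ 2 * (x * b) := by
  field_simp
  ring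

theorem sierpinski_two_forest_step (hr : r ^ 2 = 5 / 3) (hx : x ≠ 0) :
    x * r * (18 * r * b ^ 3) = 7 * (3 * b / x) * (x * b) ^ 2 + (3 * b / x) ^ 2 * (x ^ 3 * b) := by
  field_simp
  linear_combination 18 * b ^ 3 * hr

theorem sierpinski_three_forest_step (hr : r ^ 2 = 5 / 3) (hx : x ≠ 0) :
    (x * r) ^ 3 * (18 * r * b ^ 3) =
      14 * (x * b) ^ 3 + 12 * (3 * b / x) * (x * b) * (x ^ 3 * b) := by
  field_simp
  linear_combination 18 * b ^ 3 * (r ^ 2 + 5 / 3) * hr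

end SierpinskiStep

/-- The closed-form sequences `τ_n = 3·(5/3)^{-n/2}·540^{(3^n-1)/4}`,
`σ_n = (5/3)^{n/2}·540^{(3^n-1)/4}`, `ρ_n = (5/3)^{3n/2}·540^{(3^n-1)/4}`
satisfy the spanning-tree/forest recursions of the Sierpiński graph with the
initial values `τ_0 = 3`, `σ_0 = 1`, `ρ_0 = 1`. -/
theorem sierpinski_tree_forest_counts
    (τ σ ρ : ℕ → ℝ)
    (hτ : ∀ n : ℕ, τ n = 3 * (5 / 3 : ℝ) ^ (-(n : ℝ) / 2) *
      (540 : ℝ) ^ (((3 : ℝ) ^ n - 1) / 4))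
    (hσ : ∀ n : ℕ, σ n = (5 / 3 : ℝ) ^ ((n : ℝ) / 2) *
      (540 : ℝ) ^ (((3 : ℝ) ^ n - 1) / 4))
    (hρ : ∀ n : ℕ, ρ n = (5 / 3 : ℝ) ^ ((3 * (n : ℝ)) / 2) *
      (540 : ℝ) ^ (((3 : ℝ) ^ n - 1) / 4)) :
    τ 0 = 3 ∧ σ 0 = 1 ∧ ρ 0 = 1 ∧
    (∀ n : ℕ, τ (n + 1) = 6 * τ n ^ 2 * σ n) ∧
    (∀ n : ℕ, σ (n + 1) = 7 * τ n * σ n ^ 2 + τ n ^ 2 * ρ n) ∧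
    (∀ n : ℕ, ρ (n + 1) = 14 * σ n ^ 3 + 12 * τ n * σ n * ρ n) := by
  set r := √(5 / 3 : ℝ)
  set b : ℕ → ℝ := fun n ↦ (540 : ℝ) ^ (((3 : ℝ) ^ n - 1) / 4)
  have hr : r ^ 2 = 5 / 3 := Real.sq_sqrt (by norm_num)
  have hr0 : r ≠ 0 := by positivity
  have hb : ∀ n, b (n + 1) = 18 * r * b n ^ 3 := fun n ↦ by
    simp only [b, r, Real.rpow_three_pow_succ_sub_one_div_four (by norm_num : (0 : ℝ) < 540),
      sqrt_540_eq]
  have hτ' : ∀ n, τ n = 3 * b n / r ^ n := fun n ↦ by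
    rw [hτ, Real.rpow_neg_natCast_div_two (by norm_num)]
    ring
  have hσ' : ∀ n, σ n = r ^ n * b n := fun n ↦ by
    rw [hσ, Real.rpow_natCast_div_two (by norm_num)]
  have hρ' : ∀ n, ρ n = (r ^ n) ^ 3 * b n := fun n ↦ by
    rw [hρ, Real.rpow_three_mul_natCast_div_two (by norm_num)]
  have hrn : ∀ n, r ^ n ≠ 0 := fun n ↦ pow_ne_zero n hr0
  refine ⟨by simp [hτ', b], by simp [hσ', b], by simp [hρ', b],
    fun n ↦ ?_, fun n ↦ ?_, fun n ↦ ?_⟩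
  · rw [hτ', hτ', hσ', hb, pow_succ]
    exact sierpinski_tree_step hr0 (hrn n)
  · rw [hσ', hτ', hσ', hρ', hb, pow_succ]
    exact sierpinski_two_forest_step hr (hrn n)
  · rw [hρ', hτ', hσ', hρ', hb, pow_succ]
    exact sierpinski_three_forest_step hr (hrn n)
end

section
/- If sequences τ_n, σ_n, ρ_n of positive reals satisfy τ_0 = 3, σ_0 = 1, ρ_0 = 1 and the recursions τ_{n+1} = 6τ_n²σ_n, σ_{n+1} = 7τ_nσ_n² + τ_n²ρ_n, ρ_{n+1} = 14σ_n³ + 12τ_nσ_nρ_n, then for all n, τ_n/σ_n = 3·(3/5)^n and ρ_n/σ_n = (5/3)^n. -/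
/-!
Write `a = τ n / σ n` and `b = ρ n / σ n`. Dividing the recursions by `σ n ^ 3` shows that once
`a * b = 3`, they collapse to `σ (n + 1) = 10 a σ n ^ 3`, `a ↦ 3 a / 5` and `b ↦ 5 b / 3`, so the
product `a * b = 3` is invariant. Stated as proportionalities `τ n = a σ n`, `ρ n = b σ n`, the
argument needs no division, and `σ n ≠ 0` follows from the formula for `σ (n + 1)`.
-/

namespace Sierpinski

variable {K : Type*} [Field K] [CharZero K]

structure IsForestRecursion (τ σ ρ : ℕ → K) : Prop where
  τ_succ : ∀ n, τ (n + 1) = 6 * τ n ^ 2 * σ n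
  σ_succ : ∀ n, σ (n + 1) = 7 * τ n * σ n ^ 2 + τ n ^ 2 * ρ n
  ρ_succ : ∀ n, ρ (n + 1) = 14 * σ n ^ 3 + 12 * τ n * σ n * ρ n

theorem step_of_proportional {a b t s r : K} (hab : a * b = 3) (ht : t = a * s)
    (hr : r = b * s) :
    7 * t * s ^ 2 + t ^ 2 * r = 10 * a * s ^ 3 ∧
      6 * t ^ 2 * s = 3 / 5 * a * (10 * a * s ^ 3) ∧
      14 * s ^ 3 + 12 * t * s * r = 5 / 3 * b * (10 * a * s ^ 3) := by
  subst ht hr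
  refine ⟨?_, ?_, ?_⟩
  · linear_combination a * s ^ 3 * hab
  · ring
  · linear_combination (-14 / 3 * s ^ 3) * hab

theorem mul_geom_mul_geom_eq {a b : K} (hab : a * b = 3) (n : ℕ) :
    a * (3 / 5) ^ n * (b * (5 / 3) ^ n) = 3 := by
  rw [mul_mul_mul_comm, ← mul_pow, hab]
  norm_num

namespace IsForestRecursion

variable {τ σ ρ : ℕ → K} {a b : K}

theorem proportional (h : IsForestRecursion τ σ ρ) (hab : a * b = 3)
    (hτ0 : τ 0 = a * σ 0) (hρ0 : ρ 0 = b * σ 0) (n : ℕ) :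
    τ n = a * (3 / 5) ^ n * σ n ∧ ρ n = b * (5 / 3) ^ n * σ n := by
  induction n with
  | zero => simpa using ⟨hτ0, hρ0⟩
  | succ n ih =>
    obtain ⟨hσ', hτ', hρ'⟩ := step_of_proportional (mul_geom_mul_geom_eq hab n) ih.1 ih.2
    rw [h.τ_succ, h.ρ_succ, h.σ_succ, hσ', hτ', hρ']
    constructor <;> ring

theorem σ_ne_zero (h : IsForestRecursion τ σ ρ) (hab : a * b = 3)
    (hτ0 : τ 0 = a * σ 0) (hσ0 : σ 0 ≠ 0) (hρ0 : ρ 0 = b * σ 0) (n : ℕ) :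
    σ n ≠ 0 := by
  have ha : a ≠ 0 := left_ne_zero_of_mul (hab ▸ three_ne_zero)
  induction n with
  | zero => exact hσ0
  | succ n ih =>
    obtain ⟨hτn, hρn⟩ := h.proportional hab hτ0 hρ0 n
    rw [h.σ_succ, (step_of_proportional (mul_geom_mul_geom_eq hab n) hτn hρn).1]
    simp [ha, ih]

end IsForestRecursion

end Sierpinski

theorem sierpinski_tree_forest_ratios_general
    (τ σ ρ : ℕ → ℝ)
    (hτ0 : τ 0 = 3) (hσ0 : σ 0 = 1) (hρ0 : ρ 0 = 1)
    (hτ : ∀ n, τ (n + 1) = 6 * τ n ^ 2 * σ n)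
    (hσ : ∀ n, σ (n + 1) = 7 * τ n * σ n ^ 2 + τ n ^ 2 * ρ n)
    (hρ : ∀ n, ρ (n + 1) = 14 * σ n ^ 3 + 12 * τ n * σ n * ρ n) :
    ∀ n : ℕ, τ n / σ n = 3 * (3 / 5 : ℝ) ^ n ∧ ρ n / σ n = (5 / 3 : ℝ) ^ n := by
  intro n
  have h : Sierpinski.IsForestRecursion τ σ ρ := ⟨hτ, hσ, hρ⟩
  have hab : (3 : ℝ) * 1 = 3 := mul_one 3
  have hτ0' : τ 0 = 3 * σ 0 := by rw [hτ0, hσ0, mul_one]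
  have hρ0' : ρ 0 = 1 * σ 0 := by rw [hρ0, hσ0, mul_one]
  have hσn : σ n ≠ 0 := h.σ_ne_zero hab hτ0' (hσ0 ▸ one_ne_zero) hρ0' n
  obtain ⟨hτn, hρn⟩ := h.proportional hab hτ0' hρ0' n
  rw [hτn, hρn, mul_div_cancel_right₀ _ hσn, mul_div_cancel_right₀ _ hσn, one_mul]
  exact ⟨rfl, rfl⟩

/-- If positive sequences `τ, σ, ρ` satisfy the Sierpiński spanning tree/forest
recursions with `τ 0 = 3`, `σ 0 = 1`, `ρ 0 = 1`, then `τ n / σ n = 3·(3/5)^n`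
and `ρ n / σ n = (5/3)^n`. -/
theorem sierpinski_tree_forest_ratios
    (τ σ ρ : ℕ → ℝ)
    (hτpos : ∀ n, 0 < τ n) (hσpos : ∀ n, 0 < σ n) (hρpos : ∀ n, 0 < ρ n)
    (hτ0 : τ 0 = 3) (hσ0 : σ 0 = 1) (hρ0 : ρ 0 = 1)
    (hτ : ∀ n, τ (n + 1) = 6 * τ n ^ 2 * σ n)
    (hσ : ∀ n, σ (n + 1) = 7 * τ n * σ n ^ 2 + τ n ^ 2 * ρ n)
    (hρ : ∀ n, ρ (n + 1) = 14 * σ n ^ 3 + 12 * τ n * σ n * ρ n) :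
    ∀ n : ℕ, τ n / σ n = 3 * (3 / 5 : ℝ) ^ n ∧ ρ n / σ n = (5 / 3 : ℝ) ^ n :=
  sierpinski_tree_forest_ratios_general τ σ ρ hτ0 hσ0 hρ0 hτ hσ hρ
end

section
/- With the recursion of the previous context, for all n: η̄₂(n,0) = (33/28)(3/5)^n - (5/28)(1/25)^n, η̄₂(n,1) = (39/28)(3/5)^n - (29/18)(2/5)^n + (55/252)(1/25)^n, and η̄₂(n,2) = 1 - (18/7)(3/5)^n + (29/18)(2/5)^n - (5/126)(1/25)^n. -/
/-!
Every row of the transition sums to one, so `δ₂ k` is a fixed point and the deviations from it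
evolve linearly. The deviation of `η₂` is geometric with ratio `2/5`; that of `(η̄₂, η₃)` is
driven by the matrix `[[2/5, 3/10], [6/25, 6/25]]`, with eigenvalues `3/5` and `1/25`, and forced
by the deviation of `η₂`. The closed forms are the resulting mode expansions, with amplitudes
fitted to the initial values.
-/

def δ₂ {K : Type*} [Zero K] [One K] (k : ℕ) : K := if k = 2 then 1 else 0

variable {K : Type*} [Field K]

structure IsRootRecursion (η₂ η₂b η₃ : ℕ → ℕ → K) : Prop where
  eta2_succ : ∀ n k, η₂ (n + 1) k = 12 / 30 * η₂ n k + 18 / 30 * δ₂ k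
  eta2bar_succ : ∀ n k, η₂b (n + 1) k =
    6 / 30 * η₂ n k + 12 / 30 * η₂b n k + 9 / 30 * η₃ n k + 3 / 30 * δ₂ k
  eta3_succ : ∀ n k, η₃ (n + 1) k =
    14 / 50 * η₂ n k + 12 / 50 * η₂b n k + 12 / 50 * η₃ n k + 12 / 50 * δ₂ k

namespace IsRootRecursion

variable [CharZero K] {η₂ η₂b η₃ : ℕ → ℕ → K}

theorem eta2_eq (h : IsRootRecursion η₂ η₂b η₃) (n k : ℕ) :
    η₂ n k = δ₂ k + (2 / 5 : K) ^ n * (η₂ 0 k - δ₂ k) := by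
  induction n with
  | zero => ring
  | succ n ih => rw [h.eta2_succ, ih]; ring

/-- `α` and `β` are the amplitudes of the eigenmodes `(3, 2)` (eigenvalue `3/5`) and `(5, -6)`
(eigenvalue `1/25`); `-(29/18, 2/3)` is the response to the forcing `(2/5)^n (η₂ 0 k - δ₂ k)`. -/
theorem eta2bar_eta3_eq (h : IsRootRecursion η₂ η₂b η₃) (k : ℕ) (α β : K)
    (hb : η₂b 0 k = δ₂ k + 3 * α + 5 * β - 29 / 18 * (η₂ 0 k - δ₂ k))
    (hc : η₃ 0 k = δ₂ k + 2 * α - 6 * β - 2 / 3 * (η₂ 0 k - δ₂ k)) (n : ℕ) :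
    η₂b n k = δ₂ k + 3 * α * (3 / 5) ^ n + 5 * β * (1 / 25) ^ n -
        29 / 18 * (η₂ 0 k - δ₂ k) * (2 / 5) ^ n ∧
      η₃ n k = δ₂ k + 2 * α * (3 / 5) ^ n - 6 * β * (1 / 25) ^ n -
        2 / 3 * (η₂ 0 k - δ₂ k) * (2 / 5) ^ n := by
  induction n with
  | zero => simpa using ⟨hb, hc⟩
  | succ n ih =>
    rw [h.eta2bar_succ, h.eta3_succ, h.eta2_eq, ih.1, ih.2]
    constructor <;> ring

end IsRootRecursion

/-- Closed form for the root probabilities `η̄₂` (here `η₂b`). -/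
theorem root_probabilities_eta2bar
    (η₂ η₂b η₃ : ℕ → ℕ → ℚ)
    (h₂0 : η₂ 0 0 = 0 ∧ η₂ 0 1 = 1 ∧ η₂ 0 2 = 0)
    (h₂b0 : η₂b 0 0 = 1 ∧ η₂b 0 1 = 0 ∧ η₂b 0 2 = 0)
    (h₃0 : η₃ 0 0 = 1 ∧ η₃ 0 1 = 0 ∧ η₃ 0 2 = 0)
    (hrec₂ : ∀ n k, η₂ (n + 1) k =
      12 / 30 * η₂ n k + 18 / 30 * (if k = 2 then 1 else 0))
    (hrec₂b : ∀ n k, η₂b (n + 1) k =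
      6 / 30 * η₂ n k + 12 / 30 * η₂b n k + 9 / 30 * η₃ n k +
        3 / 30 * (if k = 2 then 1 else 0))
    (hrec₃ : ∀ n k, η₃ (n + 1) k =
      14 / 50 * η₂ n k + 12 / 50 * η₂b n k + 12 / 50 * η₃ n k +
        12 / 50 * (if k = 2 then 1 else 0)) :
    ∀ n : ℕ,
      η₂b n 0 = 33 / 28 * (3 / 5 : ℚ) ^ n - 5 / 28 * (1 / 25 : ℚ) ^ n ∧
      η₂b n 1 = 39 / 28 * (3 / 5 : ℚ) ^ n - 29 / 18 * (2 / 5 : ℚ) ^ n +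
        55 / 252 * (1 / 25 : ℚ) ^ n ∧
      η₂b n 2 = 1 - 18 / 7 * (3 / 5 : ℚ) ^ n + 29 / 18 * (2 / 5 : ℚ) ^ n -
        5 / 126 * (1 / 25 : ℚ) ^ n := by
  have h : IsRootRecursion η₂ η₂b η₃ := ⟨hrec₂, hrec₂b, hrec₃⟩
  obtain ⟨a₀, a₁, a₂⟩ := h₂0
  obtain ⟨b₀, b₁, b₂⟩ := h₂b0
  obtain ⟨c₀, c₁, c₂⟩ := h₃0
  intro n
  refine ⟨?_, ?_, ?_⟩
  · rw [(h.eta2bar_eta3_eq 0 (11 / 28) (-1 / 28) (by norm_num [δ₂, a₀, b₀])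
      (by norm_num [δ₂, a₀, c₀]) n).1]
    norm_num [δ₂, a₀]; ring
  · rw [(h.eta2bar_eta3_eq 1 (13 / 28) (11 / 252) (by norm_num [δ₂, a₁, b₁])
      (by norm_num [δ₂, a₁, c₁]) n).1]
    norm_num [δ₂, a₁]; ring
  · rw [(h.eta2bar_eta3_eq 2 (-6 / 7) (-1 / 126) (by norm_num [δ₂, a₂, b₂])
      (by norm_num [δ₂, a₂, c₂]) n).1]
    norm_num [δ₂, a₂]; ring
end
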